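/- If there exists an orthogonal array OA_λ(k,n) with k ≥ 2, n ≥ 2 and λ ≥ 1 that contains a row repeated m times, then k + λn² − m ≥ kn. -/

import Mathlib

/-!
Let `a` be the row that is repeated. The 0/1 vectors in `ℚ^(λn²)` indicating "column `j` shows
the symbol `x`", for `x ≠ a j`, vanish on the repeated rows, and they are linearly independent:
if `∑ j, f j (A r j) = 0` for every row `r`, then summing over the rows with `A r j = y` and
counting with the orthogonal-array property gives `λ ∑_{i ≠ j} ∑_x f i x + λ n f j y = 0`; the
choice `y = a j` kills the first term, so `f = 0`. Together with the unit vectors of the `m`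
repeated rows this gives `k (n - 1) + m` independent vectors, hence `k (n - 1) + m ≤ λ n²`.
-/

open Finset

theorem card_filter_snd_ne {α β : Type*} [Fintype α] [Fintype β] [DecidableEq β] (a : α → β) :
    #{p : α × β | p.2 ≠ a p.1} = Fintype.card α * (Fintype.card β - 1) := by
  have hfiber (i : α) : #{x | x ≠ a i} = Fintype.card β - 1 := by
    rw [filter_ne', card_erase_of_mem (mem_univ _), card_univ]
  rw [card_filter, Fintype.sum_prod_type]
  simp only [← card_filter, hfiber, sum_const, card_univ, smul_eq_mul]

theorem LinearIndependent.sum_elim_single {ι N K : Type*} [Field K] [DecidableEq N]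
    {v : ι → N → K} (hv : LinearIndependent K v) (S : Set N) (hS : ∀ i, ∀ r ∈ S, v i r = 0) :
    LinearIndependent K (Sum.elim v fun r : S => Pi.single (r : N) (1 : K)) := by
  refine hv.sum_type ((Pi.linearIndependent_single_one N K).comp _ Subtype.val_injective) ?_
  have hvS : Submodule.span K (Set.range v) ≤ Submodule.pi S fun _ => ⊥ :=
    Submodule.span_le.2 <| Set.range_subset_iff.2 fun i r hr => (Submodule.mem_bot K).2 (hS i r hr)
  have hsingle : Submodule.span K (Set.range fun r : S => (Pi.single (r : N) (1 : K) : N → K)) ≤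
      Submodule.pi Sᶜ fun _ => ⊥ :=
    Submodule.span_le.2 <| Set.range_subset_iff.2 fun r x hx =>
      (Submodule.mem_bot K).2 (Pi.single_eq_of_ne (ne_of_mem_of_not_mem r.2 hx).symm _)
  refine Disjoint.mono hvS hsingle (Submodule.disjoint_def.2 fun f h₁ h₂ => funext fun r => ?_)
  by_cases hr : r ∈ S
  · exact (Submodule.mem_bot K).1 (h₁ r hr)
  · exact (Submodule.mem_bot K).1 (h₂ r hr)

variable {R C Sym : Type*} [Fintype R] [Fintype Sym] [DecidableEq Sym]

def IsOrthogonalArray (lam : ℕ) (A : R → C → Sym) : Prop :=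
  ∀ j j', j ≠ j' → ∀ x y, #{r | A r j = x ∧ A r j' = y} = lam

def symbolIndicator (K : Type*) [Zero K] [One K] (A : R → C → Sym) (p : C × Sym) : R → K :=
  fun r => if A r p.1 = p.2 then 1 else 0

namespace IsOrthogonalArray

variable {lam : ℕ} {A : R → C → Sym}

theorem sum_filter_eq_nsmul_sum {M : Type*} [AddCommMonoid M] (hA : IsOrthogonalArray lam A)
    {j j' : C} (h : j ≠ j') (y : Sym) (g : Sym → M) :
    ∑ r with A r j' = y, g (A r j) = lam • ∑ x, g x := by
  rw [← sum_fiberwise' _ (fun r => A r j), smul_sum]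
  refine sum_congr rfl fun x _ => ?_
  rw [sum_const, filter_filter]
  simp_rw [and_comm (a := A _ j' = y)]
  rw [hA j j' h]

theorem card_filter_eq [Nontrivial C] (hA : IsOrthogonalArray lam A) (j : C) (x : Sym) :
    #{r | A r j = x} = lam * Fintype.card Sym := by
  obtain ⟨j', hj'⟩ := exists_ne j
  rw [card_eq_sum_ones]
  exact (hA.sum_filter_eq_nsmul_sum hj' x fun _ => 1).trans (by simp)

theorem sum_filter_sum_eq [Fintype C] [DecidableEq C] [Nontrivial C] {M : Type*} [AddCommMonoid M]
    (hA : IsOrthogonalArray lam A) (f : C → Sym → M) (j' : C) (y : Sym) :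
    ∑ r with A r j' = y, ∑ j, f j (A r j) =
      lam • ∑ j ∈ univ.erase j', ∑ x, f j x + (lam * Fintype.card Sym) • f j' y := by
  rw [sum_comm, ← sum_erase_add _ _ (mem_univ j')]
  congr 1
  · rw [smul_sum]
    exact sum_congr rfl fun j hj => hA.sum_filter_eq_nsmul_sum (ne_of_mem_erase hj) y (f j)
  · rw [sum_congr rfl fun r hr => by rw [(mem_filter.1 hr).2], sum_const, hA.card_filter_eq]

theorem eq_zero_of_sum_apply_eq_zero [Fintype C] [Nontrivial C] {K : Type*}
    [Field K] [CharZero K] (hA : IsOrthogonalArray lam A) (hlam : lam ≠ 0) {f : C → Sym → K}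
    {a : C → Sym} (ha : ∀ j, f j (a j) = 0) (hf : ∀ r, ∑ j, f j (A r j) = 0) : f = 0 := by
  classical
  have hfiber (j : C) (y : Sym) :
      lam • ∑ i ∈ univ.erase j, ∑ x, f i x + (lam * Fintype.card Sym) • f j y = 0 := by
    rw [← hA.sum_filter_sum_eq, sum_eq_zero fun r _ => hf r]
  ext j y
  have hothers := hfiber j (a j)
  rw [ha, smul_zero, add_zero] at hothers
  have : Nonempty Sym := ⟨y⟩
  have hy := hfiber j y
  rw [hothers, zero_add, smul_eq_zero] at hy
  exact hy.resolve_left (mul_ne_zero hlam Fintype.card_ne_zero)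

theorem linearIndepOn_symbolIndicator [Fintype C] [Nontrivial C] (K : Type*)
    [Field K] [CharZero K] (hA : IsOrthogonalArray lam A) (hlam : lam ≠ 0) (a : C → Sym) :
    LinearIndepOn K (symbolIndicator K A) {p | p.2 ≠ a p.1} := by
  rw [linearIndepOn_iff]
  intro l hl hcomb
  have hf := hA.eq_zero_of_sum_apply_eq_zero hlam (f := fun j x => l (j, x)) (a := a)
    (fun j => Finsupp.notMem_support_iff.1 fun h => hl h rfl) fun r => by
      simpa [Finsupp.linearCombination_apply, Finsupp.sum_fintype, Fintype.sum_prod_type,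
        symbolIndicator] using congrFun hcomb r
  ext p
  exact congrFun₂ hf p.1 p.2

theorem card_mul_pred_add_card_le [Fintype C] [Nontrivial C]
    (hA : IsOrthogonalArray lam A) (hlam : lam ≠ 0) (a : C → Sym) (S : Finset R)
    (hS : ∀ r ∈ S, A r = a) :
    Fintype.card C * (Fintype.card Sym - 1) + #S ≤ Fintype.card R := by
  classical
  have hli := (linearIndepOn_symbolIndicator ℚ hA hlam a).sum_elim_single (S : Set R)
    fun p r hr => if_neg <| by rw [hS r hr]; exact p.2.symm
  simpa [Fintype.card_sum, card_filter_snd_ne] using hli.fintype_card_le_finrank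

end IsOrthogonalArray

/-- Weaker bound (Remark 3.2): if an OA_λ(k,n) (k ≥ 2, n ≥ 2, λ ≥ 1) contains a row
repeated m times, then k + λn² − m ≥ kn. -/
theorem oa_repeated_row_weak_bound (k n lam m : ℕ) (hk : 2 ≤ k) (hn : 2 ≤ n) (hlam : 1 ≤ lam)
    (A : Fin (lam * n ^ 2) → Fin k → Fin n)
    (hOA : ∀ j j' : Fin k, j ≠ j' → ∀ x y : Fin n,
      (Finset.univ.filter (fun r => A r j = x ∧ A r j' = y)).card = lam)
    (S : Finset (Fin (lam * n ^ 2))) (hScard : S.card = m)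
    (hSrep : ∀ r ∈ S, ∀ r' ∈ S, A r = A r') :
    (k : ℤ) + (lam : ℤ) * n ^ 2 - m ≥ (k : ℤ) * n := by
  obtain ⟨a, ha⟩ : ∃ a : Fin k → Fin n, ∀ r ∈ S, A r = a := by
    rcases S.eq_empty_or_nonempty with rfl | ⟨r₀, hr₀⟩
    · exact ⟨fun _ => ⟨0, by omega⟩, by simp⟩
    · exact ⟨A r₀, fun r hr => hSrep r hr r₀ hr₀⟩
  have : Nontrivial (Fin k) := Fin.nontrivial_iff_two_le.2 hk
  have hbound := IsOrthogonalArray.card_mul_pred_add_card_le hOA (by omega) a S ha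
  simp only [Fintype.card_fin, hScard] at hbound
  zify [show 1 ≤ n by omega] at hbound
  linarith
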